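/- arXiv:2104.00904 — 2 statements merged into one kernel-verified Lean document; each statement's English description precedes it below -/
import Mathlib

section
/- Let K : ℝ^N → [0,∞) be integrable, even (K(−z) = K(z) for all z), and with finite second moment ∫_{ℝ^N} ‖z‖² K(z) dz < ∞. For ε > 0 set K_ε(z) := ε^{−(N+2)} K(z/ε) and m_ε := ∫_{ℝ^N} K_ε(z) dz. Let u : ℝ^N → ℝ be twice continuously differentiable and bounded, with bounded and uniformly continuous second derivative. Then for every x ∈ ℝ^N, lim_{ε→0⁺} [ ∫_{ℝ^N} K_ε(x−y) u(y) dy − m_ε u(x) ] = Σ_{i,j=1}^N d_{ij} ∂²u/∂x_i∂x_j (x), where d_{ij} := (1/2) ∫_{ℝ^N} z_i z_j K(z) dz. -/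
/-!
Substituting `y = x - ε z` turns the operator into `ε⁻² ∫ K(z) (u(x - εz) - u(x)) dz`, and since
`K` is even this equals `½ ∫ K(z) ε⁻² (u(x + εz) + u(x - εz) - 2u(x)) dz`. The mean value
inequality for `Du` on the segment `[x - h, x + h]` gives
`|u(x + h) + u(x - h) - 2u(x) - D²u(x)(h, h)| ≤ 2 sup_{B(x,|h|)} ‖D²u - D²u(x)‖ |h|²`,
so the integrand tends to `½ K(z) D²u(x)(z, z)` and is dominated by a multiple of `|z|² |K(z)|`.
Dominated convergence and the expansion of `D²u(x)(z, z)` in coordinates give the limit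
`∑ d_ij ∂_i ∂_j u(x)`.
-/

open MeasureTheory Filter Topology Metric Set

section SecondDifference

variable {E F : Type*} [NormedAddCommGroup E] [NormedSpace ℝ E]
  [NormedAddCommGroup F] [NormedSpace ℝ F] {u : E → F}

theorem norm_secondDiff_sub_le (hu : ContDiff ℝ 2 u) (x h : E)
    (A : E →L[ℝ] E →L[ℝ] F) {C : ℝ}
    (hC : ∀ y ∈ closedBall x ‖h‖, ‖fderiv ℝ (fderiv ℝ u) y - A‖ ≤ C) :
    ‖u (x + h) + u (x - h) - (2 : ℝ) • u x - A h h‖ ≤ 2 * C * ‖h‖ ^ 2 := by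
  have hdu : Differentiable ℝ u := hu.differentiable (by norm_num)
  have hddu : Differentiable ℝ (fderiv ℝ u) :=
    (hu.fderiv_right (m := 1) (by norm_num)).differentiable (by norm_num)
  have hC0 : 0 ≤ C := (norm_nonneg (fderiv ℝ (fderiv ℝ u) x - A)).trans
    (hC x (mem_closedBall_self (norm_nonneg h)))
  have hDu : ∀ y ∈ closedBall x ‖h‖, ∀ y' ∈ closedBall x ‖h‖,
      ‖fderiv ℝ u y - fderiv ℝ u y' - A (y - y')‖ ≤ C * ‖y - y'‖ := fun y hy y' hy' =>
    (convex_closedBall x ‖h‖).norm_image_sub_le_of_norm_hasFDerivWithin_le'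
      (fun z _ => (hddu z).hasFDerivAt.hasFDerivWithinAt) hC hy' hy
  have hline : ∀ t : ℝ, HasDerivAt (fun t : ℝ => x + t • h) h t := fun t => by
    simpa using ((hasDerivAt_id t).smul_const h).const_add x
  have hline' : ∀ t : ℝ, HasDerivAt (fun t : ℝ => x - t • h) (-h) t := fun t => by
    simpa using ((hasDerivAt_id t).smul_const h).const_sub x
  have hg : ∀ t : ℝ, HasDerivAt (fun t : ℝ => u (x + t • h) + u (x - t • h) - t ^ 2 • A h h)
      ((fderiv ℝ u (x + t • h) - fderiv ℝ u (x - t • h) - A ((x + t • h) - (x - t • h))) h) t := by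
    intro t
    have hsq : HasDerivAt (fun t : ℝ => t ^ 2 • A h h) ((2 * t) • A h h) t := by
      simpa using (hasDerivAt_pow 2 t).smul_const (A h h)
    refine ((((hdu _).hasFDerivAt.comp_hasDerivAt t (hline t)).add
      ((hdu _).hasFDerivAt.comp_hasDerivAt t (hline' t))).sub hsq).congr_deriv ?_
    rw [show x + t • h - (x - t • h) = (2 * t) • h by module]
    simp [map_smul]
    module
  have hg' : ∀ t ∈ Icc (0 : ℝ) 1,
      ‖(fderiv ℝ u (x + t • h) - fderiv ℝ u (x - t • h) - A ((x + t • h) - (x - t • h))) h‖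
        ≤ 2 * C * ‖h‖ ^ 2 := by
    rintro t ⟨ht0, ht1⟩
    have hball : ∀ s : ℝ, |s| ≤ 1 → x + s • h ∈ closedBall x ‖h‖ := fun s hs => by
      simpa [norm_smul] using mul_le_of_le_one_left (norm_nonneg h) hs
    have hplus := hball t (abs_le.2 ⟨by linarith, ht1⟩)
    have hminus : x - t • h ∈ closedBall x ‖h‖ := by
      simpa [sub_eq_add_neg] using hball (-t) (abs_le.2 ⟨by linarith, by linarith⟩)
    calc _ ≤ ‖fderiv ℝ u (x + t • h) - fderiv ℝ u (x - t • h) - A ((x + t • h) - (x - t • h))‖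
          * ‖h‖ := ContinuousLinearMap.le_opNorm _ _
      _ ≤ C * ‖(x + t • h) - (x - t • h)‖ * ‖h‖ := by gcongr; exact hDu _ hplus _ hminus
      _ = 2 * t * C * ‖h‖ ^ 2 := by
        rw [show x + t • h - (x - t • h) = (2 * t) • h by module, norm_smul,
          Real.norm_of_nonneg (by linarith)]
        ring
      _ ≤ 2 * C * ‖h‖ ^ 2 := by gcongr; linarith
  have key := (convex_Icc (0 : ℝ) 1).norm_image_sub_le_of_norm_hasDerivWithin_le
    (fun t _ => (hg t).hasDerivWithinAt) hg' (left_mem_Icc.2 zero_le_one)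
    (right_mem_Icc.2 zero_le_one)
  have e : u (x + (1 : ℝ) • h) + u (x - (1 : ℝ) • h) - (1 : ℝ) ^ 2 • A h h
      - (u (x + (0 : ℝ) • h) + u (x - (0 : ℝ) • h) - (0 : ℝ) ^ 2 • A h h)
      = u (x + h) + u (x - h) - (2 : ℝ) • u x - A h h := by
    simp only [one_smul, zero_smul, add_zero, sub_zero]
    module
  rw [e] at key
  simpa using key

theorem norm_inv_sq_smul_secondDiff_sub_le (hu : ContDiff ℝ 2 u) (x z : E)
    (A : E →L[ℝ] E →L[ℝ] F) {C ε : ℝ} (hε : ε ≠ 0)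
    (hC : ∀ y ∈ closedBall x ‖ε • z‖, ‖fderiv ℝ (fderiv ℝ u) y - A‖ ≤ C) :
    ‖(ε ^ 2)⁻¹ • (u (x + ε • z) + u (x - ε • z) - (2 : ℝ) • u x) - A z z‖
      ≤ 2 * C * ‖z‖ ^ 2 := by
  have hε2 : 0 < ε ^ 2 := by positivity
  have hA : A (ε • z) (ε • z) = ε ^ 2 • A z z := by simp [map_smul, smul_smul, sq]
  have key := norm_secondDiff_sub_le hu x (ε • z) A hC
  rw [hA, norm_smul, mul_pow, Real.norm_eq_abs, sq_abs] at key
  calc _ = ‖(ε ^ 2)⁻¹ • (u (x + ε • z) + u (x - ε • z) - (2 : ℝ) • u x - ε ^ 2 • A z z)‖ := by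
        rw [smul_sub _ _ (ε ^ 2 • A z z), smul_smul, inv_mul_cancel₀ hε2.ne', one_smul]
    _ = (ε ^ 2)⁻¹ * ‖u (x + ε • z) + u (x - ε • z) - (2 : ℝ) • u x - ε ^ 2 • A z z‖ := by
        rw [norm_smul, Real.norm_of_nonneg (inv_nonneg.2 hε2.le)]
    _ ≤ (ε ^ 2)⁻¹ * (2 * C * (ε ^ 2 * ‖z‖ ^ 2)) := by gcongr
    _ = 2 * C * ‖z‖ ^ 2 := by field_simp

theorem tendsto_inv_sq_smul_secondDiff (hu : ContDiff ℝ 2 u) (x z : E) :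
    Tendsto (fun ε : ℝ => (ε ^ 2)⁻¹ • (u (x + ε • z) + u (x - ε • z) - (2 : ℝ) • u x))
      (𝓝[≠] 0) (𝓝 (fderiv ℝ (fderiv ℝ u) x z z)) := by
  have hcont : Continuous (fderiv ℝ (fderiv ℝ u)) :=
    (hu.fderiv_right (m := 1) (by norm_num)).continuous_fderiv (by norm_num)
  refine Metric.tendsto_nhds.2 fun η hη => ?_
  set η' := η / (2 * (‖z‖ ^ 2 + 1))
  have hη' : 0 < η' := by positivity
  obtain ⟨δ, hδ, hball⟩ :=
    (Metric.continuousAt_iff (β := E →L[ℝ] E →L[ℝ] F)).1 hcont.continuousAt η' hη'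
  have hsmall : ∀ᶠ ε : ℝ in 𝓝 0, ‖ε • z‖ < δ := by
    have : Tendsto (fun ε : ℝ => ε • z) (𝓝 0) (𝓝 0) := by
      simpa using (tendsto_id (x := 𝓝 (0 : ℝ))).smul_const z
    simpa using this.eventually (ball_mem_nhds 0 hδ)
  filter_upwards [self_mem_nhdsWithin, nhdsWithin_le_nhds hsmall] with ε hε hεδ
  rw [dist_eq_norm]
  calc _ ≤ 2 * η' * ‖z‖ ^ 2 :=
        norm_inv_sq_smul_secondDiff_sub_le hu x z _ hε fun y hy =>
          (dist_eq_norm (fderiv ℝ (fderiv ℝ u) y) _ ▸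
            hball ((mem_closedBall.1 hy).trans_lt hεδ)).le
    _ < η := by
      have : 2 * η' * (‖z‖ ^ 2 + 1) = η := by simp only [η']; field_simp
      nlinarith

end SecondDifference

section Kernel

variable {E : Type*} [NormedAddCommGroup E] [NormedSpace ℝ E] [MeasurableSpace E] [BorelSpace E]

theorem tendsto_integral_mul_inv_sq_mul_secondDiff {μ : Measure E} {K : E → ℝ}
    (hK : AEStronglyMeasurable K μ) (hK2 : Integrable (fun z => ‖z‖ ^ 2 * K z) μ)
    {u : E → ℝ} (hu : ContDiff ℝ 2 u) {C : ℝ} (hC : ∀ y, ‖fderiv ℝ (fderiv ℝ u) y‖ ≤ C)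
    (x : E) :
    Tendsto (fun ε : ℝ => ∫ z, K z * ((ε ^ 2)⁻¹ * (u (x + ε • z) + u (x - ε • z) - 2 * u x)) ∂μ)
      (𝓝[≠] 0) (𝓝 (∫ z, K z * fderiv ℝ (fderiv ℝ u) x z z ∂μ)) := by
  have hmeas : ∀ ε : ℝ, AEStronglyMeasurable
      (fun z => K z * ((ε ^ 2)⁻¹ * (u (x + ε • z) + u (x - ε • z) - 2 * u x))) μ := fun ε =>
    hK.mul (Continuous.aestronglyMeasurable (by fun_prop (disch := exact hu.continuous)))
  have hbound : ∀ᶠ ε : ℝ in 𝓝[≠] 0, ∀ z,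
      ‖K z * ((ε ^ 2)⁻¹ * (u (x + ε • z) + u (x - ε • z) - 2 * u x))‖
        ≤ 2 * C * ‖‖z‖ ^ 2 * K z‖ := by
    filter_upwards [self_mem_nhdsWithin] with ε hε z
    have h := norm_inv_sq_smul_secondDiff_sub_le hu x z 0 hε fun y _ => by simpa using hC y
    simp only [smul_eq_mul, zero_apply, sub_zero] at h
    calc _ = ‖K z‖ * ‖(ε ^ 2)⁻¹ * (u (x + ε • z) + u (x - ε • z) - 2 * u x)‖ := norm_mul _ _
      _ ≤ ‖K z‖ * (2 * C * ‖z‖ ^ 2) := by gcongr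
      _ = 2 * C * ‖‖z‖ ^ 2 * K z‖ := by rw [norm_mul, norm_pow, norm_norm]; ring
  refine tendsto_integral_filter_of_dominated_convergence _ (.of_forall hmeas)
    (hbound.mono fun ε h => .of_forall h) (hK2.norm.const_mul _) (.of_forall fun z => ?_)
  simpa using (tendsto_inv_sq_smul_secondDiff hu x z).const_mul (K z)

end Kernel

section Rescaling

open Module

variable {E : Type*} [NormedAddCommGroup E] [NormedSpace ℝ E] [MeasurableSpace E] [BorelSpace E]
  [FiniteDimensional ℝ E] (μ : Measure E) [μ.IsAddHaarMeasure]

theorem integral_inv_pow_mul_comp_inv_smul (g : E → ℝ) (k : ℕ) {ε : ℝ} (hε : 0 < ε) :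
    ∫ w, (ε ^ (finrank ℝ E + k))⁻¹ * g (ε⁻¹ • w) ∂μ = (ε ^ k)⁻¹ * ∫ w, g w ∂μ := by
  rw [integral_const_mul, Measure.integral_comp_inv_smul_of_nonneg μ g hε.le, smul_eq_mul, pow_add]
  field_simp

theorem integral_rescaled_kernel_sub_eq {K : E → ℝ} (hKint : Integrable K μ)
    (hKeven : ∀ z, K (-z) = K z) {u : E → ℝ} (hu : Continuous u) (hub : ∃ C, ∀ y, |u y| ≤ C)
    (x : E) {ε : ℝ} (hε : 0 < ε) :
    (∫ y, (ε ^ (finrank ℝ E + 2))⁻¹ * K (ε⁻¹ • (x - y)) * u y ∂μ) -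
        (∫ z, (ε ^ (finrank ℝ E + 2))⁻¹ * K (ε⁻¹ • z) ∂μ) * u x
      = 1 / 2 * ∫ z, K z * ((ε ^ 2)⁻¹ * (u (x + ε • z) + u (x - ε • z) - 2 * u x)) ∂μ := by
  obtain ⟨C, hC⟩ := hub
  have hint : ∀ s : ℝ, Integrable (fun z => K z * u (x + s • z)) μ := fun s =>
    hKint.mul_bdd (c := C) (hu.comp (by fun_prop)).aestronglyMeasurable
      (.of_forall fun z => hC _)
  have hconv : ∫ y, (ε ^ (finrank ℝ E + 2))⁻¹ * K (ε⁻¹ • (x - y)) * u y ∂μ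
      = (ε ^ 2)⁻¹ * ∫ z, K z * u (x + (-ε) • z) ∂μ := by
    rw [← integral_sub_left_eq_self _ μ x, ← integral_inv_pow_mul_comp_inv_smul μ _ 2 hε]
    refine integral_congr_ae (.of_forall fun y => ?_)
    simp [mul_assoc, smul_smul, hε.ne', sub_eq_add_neg]
  have hsymm : ∫ z, K z * u (x + ε • z) ∂μ = ∫ z, K z * u (x + (-ε) • z) ∂μ := by
    rw [← integral_neg_eq_self _ μ]
    simp [hKeven]
  have hsplit : ∀ z, K z * ((ε ^ 2)⁻¹ * (u (x + ε • z) + u (x - ε • z) - 2 * u x))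
      = (ε ^ 2)⁻¹ * (K z * u (x + ε • z) + K z * u (x + (-ε) • z) - 2 * u x * K z) := fun z => by
    rw [neg_smul, ← sub_eq_add_neg]; ring
  simp_rw [hconv, integral_inv_pow_mul_comp_inv_smul μ K 2 hε, hsplit]
  have hsum : Integrable (fun z => K z * u (x + ε • z) + K z * u (x + (-ε) • z)) μ :=
    (hint ε).add (hint (-ε))
  rw [integral_const_mul, integral_sub hsum (hKint.const_mul _),
    integral_add (hint ε) (hint (-ε)), integral_const_mul, hsymm]
  ring

end Rescaling

theorem fderiv_apply_const_eq_fderiv_fderiv {E F : Type*} [NormedAddCommGroup E]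
    [NormedSpace ℝ E] [NormedAddCommGroup F] [NormedSpace ℝ F] {u : E → F} {x : E}
    (hu : DifferentiableAt ℝ (fderiv ℝ u) x) (v w : E) :
    fderiv ℝ (fun y => fderiv ℝ u y v) x w = fderiv ℝ (fderiv ℝ u) x w v := by
  simp [fderiv_clm_apply hu (differentiableAt_const v)]

section Euclidean

open EuclideanSpace

variable {ι : Type*} [Fintype ι] [DecidableEq ι]

theorem apply_apply_eq_sum_single (A : EuclideanSpace ℝ ι →L[ℝ] EuclideanSpace ℝ ι →L[ℝ] ℝ)
    (z w : EuclideanSpace ℝ ι) :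
    A z w = ∑ i, ∑ j, z i * w j * A (single i 1) (single j 1) := by
  conv_lhs => rw [← (basisFun ι ℝ).sum_repr z, ← (basisFun ι ℝ).sum_repr w]
  simp only [map_sum, map_smul, FunLike.coe_sum, Finset.sum_apply,
    FunLike.coe_smul, Pi.smul_apply, basisFun_repr, basisFun_apply, smul_eq_mul,
    Finset.mul_sum]
  rw [Finset.sum_comm]
  exact Finset.sum_congr rfl fun i _ => Finset.sum_congr rfl fun j _ => by ring

theorem integral_mul_apply_apply_eq_sum_moments {μ : Measure (EuclideanSpace ℝ ι)}
    {K : EuclideanSpace ℝ ι → ℝ} (hK : AEStronglyMeasurable K μ)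
    (hK2 : Integrable (fun z => ‖z‖ ^ 2 * K z) μ)
    (A : EuclideanSpace ℝ ι →L[ℝ] EuclideanSpace ℝ ι →L[ℝ] ℝ) :
    ∫ z, K z * A z z ∂μ
      = ∑ i, ∑ j, (∫ z, z i * z j * K z ∂μ) * A (single i 1) (single j 1) := by
  have hmoment : ∀ i j, Integrable (fun z : EuclideanSpace ℝ ι => z i * z j * K z) μ := by
    intro i j
    refine hK2.mono (.mul (Continuous.aestronglyMeasurable (by fun_prop)) hK)
      (.of_forall fun z => ?_)
    rw [norm_mul, norm_mul, norm_mul, norm_pow, norm_norm, sq]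
    gcongr <;> exact PiLp.norm_apply_le z _
  have hexp : ∀ z : EuclideanSpace ℝ ι,
      K z * A z z = ∑ i, ∑ j, z i * z j * K z * A (single i 1) (single j 1) := fun z => by
    rw [apply_apply_eq_sum_single A z z, Finset.mul_sum]
    exact Finset.sum_congr rfl fun i _ => by rw [Finset.mul_sum]; ring_nf
  rw [integral_congr_ae (.of_forall hexp), integral_finsetSum _ fun i _ =>
    integrable_finsetSum _ fun j _ => (hmoment i j).mul_const _]
  refine Finset.sum_congr rfl fun i _ => ?_
  rw [integral_finsetSum _ fun j _ => (hmoment i j).mul_const _]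
  exact Finset.sum_congr rfl fun j _ => integral_mul_const _ _

end Euclidean

open EuclideanSpace in
theorem stmt_1_general {N : ℕ}
    (K : EuclideanSpace ℝ (Fin N) → ℝ)
    (hKint : Integrable K)
    (hKeven : ∀ z, K (-z) = K z)
    (hK2 : Integrable fun z : EuclideanSpace ℝ (Fin N) => ‖z‖ ^ 2 * K z)
    (u : EuclideanSpace ℝ (Fin N) → ℝ)
    (hu : ContDiff ℝ 2 u)
    (hub : ∃ C, ∀ x, |u x| ≤ C)
    (hu2b : ∃ C, ∀ x, ‖iteratedFDeriv ℝ 2 u x‖ ≤ C) :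
    ∀ x : EuclideanSpace ℝ (Fin N),
      Tendsto
        (fun ε : ℝ =>
          (∫ y, (ε ^ (N + 2))⁻¹ * K (ε⁻¹ • (x - y)) * u y) -
            (∫ z, (ε ^ (N + 2))⁻¹ * K (ε⁻¹ • z)) * u x)
        (𝓝[>] (0 : ℝ))
        (𝓝 (∑ i : Fin N, ∑ j : Fin N,
          ((1 : ℝ) / 2 * ∫ z : EuclideanSpace ℝ (Fin N), z i * z j * K z) *
            fderiv ℝ (fun y => fderiv ℝ u y (EuclideanSpace.single j 1)) x
              (EuclideanSpace.single i 1))) := by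
  intro x
  obtain ⟨C, hC⟩ := hu2b
  have hD2 : ∀ y, ‖fderiv ℝ (fderiv ℝ u) y‖ ≤ C := fun y => by
    rw [← norm_iteratedFDeriv_one, norm_iteratedFDeriv_fderiv]
    exact hC y
  have hddu : Differentiable ℝ (fderiv ℝ u) :=
    (hu.fderiv_right (m := 1) (by norm_num)).differentiable (by norm_num)
  have hlimit : ∑ i : Fin N, ∑ j : Fin N,
      ((1 : ℝ) / 2 * ∫ z : EuclideanSpace ℝ (Fin N), z i * z j * K z) *
        fderiv ℝ (fun y => fderiv ℝ u y (single j 1)) x (single i 1)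
      = 1 / 2 * ∫ z, K z * fderiv ℝ (fderiv ℝ u) x z z := by
    rw [integral_mul_apply_apply_eq_sum_moments hKint.aestronglyMeasurable hK2]
    simp_rw [Finset.mul_sum]
    refine Finset.sum_congr rfl fun i _ => Finset.sum_congr rfl fun j _ => ?_
    rw [fderiv_apply_const_eq_fderiv_fderiv (hddu x)]
    ring
  rw [hlimit]
  refine (((tendsto_integral_mul_inv_sq_mul_secondDiff hKint.aestronglyMeasurable hK2 hu hD2
    x).mono_left (nhdsWithin_mono _ fun ε hε => ne_of_gt hε)).const_mul (1 / 2)).congr' ?_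
  filter_upwards [self_mem_nhdsWithin] with ε hε
  simpa using (integral_rescaled_kernel_sub_eq volume hKint hKeven hu.continuous hub x hε).symm

/-- Focusing kernel limit of the homogeneous nonlocal diffusion operator. -/
theorem stmt_1 {N : ℕ}
    (K : EuclideanSpace ℝ (Fin N) → ℝ)
    (hK0 : ∀ z, 0 ≤ K z)
    (hKint : Integrable K)
    (hKeven : ∀ z, K (-z) = K z)
    (hK2 : Integrable fun z : EuclideanSpace ℝ (Fin N) => ‖z‖ ^ 2 * K z)
    (u : EuclideanSpace ℝ (Fin N) → ℝ)
    (hu : ContDiff ℝ 2 u)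
    (hub : ∃ C, ∀ x, |u x| ≤ C)
    (hu2b : ∃ C, ∀ x, ‖iteratedFDeriv ℝ 2 u x‖ ≤ C)
    (hu2c : UniformContinuous fun x => iteratedFDeriv ℝ 2 u x) :
    ∀ x : EuclideanSpace ℝ (Fin N),
      Tendsto
        (fun ε : ℝ =>
          (∫ y, (ε ^ (N + 2))⁻¹ * K (ε⁻¹ • (x - y)) * u y) -
            (∫ z, (ε ^ (N + 2))⁻¹ * K (ε⁻¹ • z)) * u x)
        (𝓝[>] (0 : ℝ))
        (𝓝 (∑ i : Fin N, ∑ j : Fin N,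
          ((1 : ℝ) / 2 * ∫ z : EuclideanSpace ℝ (Fin N), z i * z j * K z) *
            fderiv ℝ (fun y => fderiv ℝ u y (EuclideanSpace.single j 1)) x
              (EuclideanSpace.single i 1))) :=
  stmt_1_general K hKint hKeven hK2 u hu hub hu2b
end

section
/- Let h : ℝ → ℝ be continuous with 0 < inf_ℝ h ≤ sup_ℝ h < ∞, and define φ(x) := ∫_0^x ds/h(s). Then φ is a strictly increasing bijection from ℝ onto ℝ. Moreover, for any nonnegative integrable K̃ ∈ L¹(ℝ), setting J(x,y) := (1/h(y)) K̃( φ(y) − φ(x) ), the following hold for every integrable u : ℝ → ℝ and every x ∈ ℝ: (i) ∫_ℝ J(x,y) dy = ∫_ℝ K̃(w) dw; (ii) h(x) ∫_ℝ J(y,x) u(y) dy = ∫_ℝ K̃( φ(x) − w ) v(w) dw, where v(w) := h(φ^{-1}(w)) u(φ^{-1}(w)). Consequently h(x) [ ∫_ℝ J(y,x) u(y) dy − u(x) ∫_ℝ J(x,y) dy ] = ∫_ℝ K̃(φ(x)−w) v(w) dw − ( ∫_ℝ K̃ ) v(φ(x)), so the change of variables x' = φ(x) reduces the heterogeneous nonlocal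 equation with jump rate J to the homogeneous nonlocal equation u_t = K̃ ∗ u − (∫K̃) u for v. -/
/-!
Since `φ' = 1/h` is pinched between `1/C` and `1/c`, the map `φ` is strictly increasing and grows
at least linearly in both directions, hence a bijection of `ℝ`. The substitution `w = φ y`,
`dw = dy / h y`, turns every integral against the jump rate `J` into an integral against `K̃`;
translation invariance of Lebesgue measure then gives the mass identity, and composing with
`φ⁻¹` the gain term.
-/

open MeasureTheory Filter Function

theorem surjective_of_pos_le_deriv {f : ℝ → ℝ} (hf : Differentiable ℝ f) {m : ℝ}
    (hm : 0 < m) (hle : ∀ x, m ≤ deriv f x) : Surjective f := by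
  have hlin : ∀ ⦃x y⦄, x ≤ y → m * (y - x) ≤ f y - f x :=
    mul_sub_le_image_sub_of_le_deriv hf hle
  refine hf.continuous.surjective ?_ ?_
  · refine tendsto_atTop_mono' _ ?_
      (tendsto_atTop_add_const_left _ (f 0) (tendsto_id.const_mul_atTop hm))
    filter_upwards [eventually_ge_atTop 0] with x hx
    show f 0 + m * x ≤ f x
    linarith [hlin hx]
  · refine tendsto_atBot_mono' _ ?_
      (tendsto_atBot_add_const_left _ (f 0) (tendsto_id.const_mul_atBot hm))
    filter_upwards [eventually_le_atBot 0] with x hx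
    show f x ≤ f 0 + m * x
    linarith [hlin hx]

theorem integral_eq_integral_deriv_smul_comp {E : Type*} [NormedAddCommGroup E]
    [NormedSpace ℝ E] {φ φ' : ℝ → ℝ} (hφ : ∀ x, HasDerivAt φ (φ' x) x)
    (hφ' : ∀ x, 0 ≤ φ' x) (hbij : Bijective φ) (g : ℝ → E) : ∫ w, g w = ∫ y, φ' y • g (φ y) := by
  have := integral_image_eq_integral_abs_deriv_smul MeasurableSet.univ
    (fun x _ => (hφ x).hasDerivWithinAt) hbij.injective.injOn g
  simpa only [Set.image_univ, hbij.surjective.range_eq, Measure.restrict_univ,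
    abs_of_nonneg (hφ' _)] using this

theorem stmt_13_general (h : ℝ → ℝ) (hcont : Continuous h)
    (c C : ℝ) (hc : 0 < c) (hbd : ∀ x, c ≤ h x ∧ h x ≤ C)
    (φ : ℝ → ℝ) (hφ : ∀ x, φ x = ∫ s in (0 : ℝ)..x, (h s)⁻¹)
    (K' : ℝ → ℝ) :
    StrictMono φ ∧ Function.Bijective φ ∧
      ∀ u : ℝ → ℝ, Integrable u → ∀ x : ℝ,
        (∫ y, (h y)⁻¹ * K' (φ y - φ x)) = (∫ w, K' w) ∧
        (h x * ∫ y, (h x)⁻¹ * K' (φ x - φ y) * u y) =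
          (∫ w, K' (φ x - w) * (h (Function.invFun φ w) * u (Function.invFun φ w))) ∧
        h x * ((∫ y, (h x)⁻¹ * K' (φ x - φ y) * u y) - u x * ∫ y, (h y)⁻¹ * K' (φ y - φ x)) =
          (∫ w, K' (φ x - w) * (h (Function.invFun φ w) * u (Function.invFun φ w))) -
            (∫ w, K' w) * (h (Function.invFun φ (φ x)) * u (Function.invFun φ (φ x))) := by
  have hpos : ∀ x, 0 < h x := fun x => hc.trans_le (hbd x).1
  have hderiv : ∀ x, HasDerivAt φ (h x)⁻¹ x := by
    rw [funext hφ]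
    exact fun x => ((hcont.inv₀ fun s => (hpos s).ne').integral_hasStrictDerivAt 0 x).hasDerivAt
  have hmono : StrictMono φ := strictMono_of_hasDerivAt_pos hderiv fun x => inv_pos.2 (hpos x)
  have hbij : Bijective φ :=
    ⟨hmono.injective, surjective_of_pos_le_deriv (fun x => (hderiv x).differentiableAt)
      (inv_pos.2 (hc.trans_le ((hbd 0).1.trans (hbd 0).2)))
      fun x => (hderiv x).deriv ▸ inv_anti₀ (hpos x) (hbd x).2⟩
  have hcv (g : ℝ → ℝ) :=
    integral_eq_integral_deriv_smul_comp hderiv (fun x => (inv_pos.2 (hpos x)).le) hbij g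
  have hinv := leftInverse_invFun hbij.injective
  refine ⟨hmono, hbij, fun u _ x => ?_⟩
  have hmass : ∫ y, (h y)⁻¹ * K' (φ y - φ x) = ∫ w, K' w := by
    rw [← integral_sub_right_eq_self K' (φ x), hcv fun w => K' (w - φ x)]
    rfl
  have hgain : h x * ∫ y, (h x)⁻¹ * K' (φ x - φ y) * u y =
      ∫ w, K' (φ x - w) * (h (invFun φ w) * u (invFun φ w)) := by
    rw [hcv fun w => K' (φ x - w) * (h (invFun φ w) * u (invFun φ w)), ← integral_const_mul]
    congr 1 with y
    rw [hinv y, smul_eq_mul]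
    field_simp [(hpos x).ne', (hpos y).ne']
  exact ⟨hmass, hgain, by rw [mul_sub, hgain, hmass, hinv x]; ring⟩

/-- The food-metric change of variables `x' = φ(x) = ∫_0^x ds/h(s)` reduces the
Stratonovich-type heterogeneous nonlocal model `J(x,y) = h(y)⁻¹ K̃(φ(y) - φ(x))`
to the homogeneous nonlocal model. -/
theorem stmt_13 (h : ℝ → ℝ) (hcont : Continuous h)
    (c C : ℝ) (hc : 0 < c) (hbd : ∀ x, c ≤ h x ∧ h x ≤ C)
    (φ : ℝ → ℝ) (hφ : ∀ x, φ x = ∫ s in (0 : ℝ)..x, (h s)⁻¹)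
    (K' : ℝ → ℝ) (hK'0 : ∀ z, 0 ≤ K' z) (hK'int : Integrable K') :
    StrictMono φ ∧ Function.Bijective φ ∧
      ∀ u : ℝ → ℝ, Integrable u → ∀ x : ℝ,
        (∫ y, (h y)⁻¹ * K' (φ y - φ x)) = (∫ w, K' w) ∧
        (h x * ∫ y, (h x)⁻¹ * K' (φ x - φ y) * u y) =
          (∫ w, K' (φ x - w) * (h (Function.invFun φ w) * u (Function.invFun φ w))) ∧
        h x * ((∫ y, (h x)⁻¹ * K' (φ x - φ y) * u y) - u x * ∫ y, (h y)⁻¹ * K' (φ y - φ x)) =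
          (∫ w, K' (φ x - w) * (h (Function.invFun φ w) * u (Function.invFun φ w))) -
            (∫ w, K' w) * (h (Function.invFun φ (φ x)) * u (Function.invFun φ (φ x))) :=
  stmt_13_general h hcont c C hc hbd φ hφ K'
end
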